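/- Let n ≥ 2 and c > 0, fix ω_0 ∈ S^{n−1} and δ > 0, and let f ∈ C_c^∞(ℝ^{1+n}; S^2). Assume L̃^{2,k} f((t,x), ω) = 0 for all ω ∈ B_n(ω_0, δ), all (t,x) ∈ ℝ^{1+n} and k = 0,1,2. Then for k = 0,1, every i ∈ {1,…,n}, all (t,x) ∈ ℝ^{1+n} and all ω ∈ B_n(ω_0, δ): L̃^{1,k}((f)_i)((t,x), ω) = −c ω_i · L̃^{1,k}((f)_0)((t,x), ω). -/

import Mathlib

open MeasureTheory Finset

noncomputable section

/-- The light direction `ω̃ = (c, ω) ∈ ℝ^{1+n}`. -/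
def ld (n : ℕ) (c : ℝ) (ω : Fin n → ℝ) : Fin (n + 1) → ℝ := Fin.cons c ω

/-- The `k`-th momentum light ray transform of a rank-`m` symmetric tensor field,
`L^{m,k} f((t,x), ω) = Σ ω̃_{i_1}⋯ω̃_{i_m} ∫ s^k f_{i_1…i_m}((t,x) + s ω̃) ds`. -/
def mlrt (n m : ℕ) (c : ℝ) (k : ℕ)
    (f : (Fin m → Fin (n + 1)) → (Fin (n + 1) → ℝ) → ℂ)
    (x : Fin (n + 1) → ℝ) (ω : Fin n → ℝ) : ℂ :=
  ∑ i : Fin m → Fin (n + 1),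
    (∏ j, (ld n c ω (i j) : ℂ)) *
      ∫ s : ℝ, (s : ℂ) ^ k * f i (x + s • ld n c ω)

/-- A tensor field is symmetric: invariant under permutations of its indices. -/
def IsSymmF (n m : ℕ) (f : (Fin m → Fin (n + 1)) → (Fin (n + 1) → ℝ) → ℂ) : Prop :=
  ∀ (σ : Equiv.Perm (Fin m)) (i : Fin m → Fin (n + 1)), f (i ∘ σ) = f i

/-- All components are smooth and compactly supported. -/
def IsCc (n m : ℕ) (f : (Fin m → Fin (n + 1)) → (Fin (n + 1) → ℝ) → ℂ) : Prop :=
  ∀ i, ContDiff ℝ (⊤ : ℕ∞) (f i) ∧ HasCompactSupport (f i)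

/-- `ω ∈ S^{n-1}` (Euclidean unit sphere). -/
def onSphere (n : ℕ) (ω : Fin n → ℝ) : Prop := ∑ i, ω i ^ 2 = 1

/-- `ω ∈ B_n(ω₀, δ)`: on the sphere and at Euclidean distance `< δ` from `ω₀`. -/
def inBall (n : ℕ) (ω₀ : Fin n → ℝ) (δ : ℝ) (ω : Fin n → ℝ) : Prop :=
  onSphere n ω ∧ ∑ i, (ω i - ω₀ i) ^ 2 < δ ^ 2

/-- The `k`-th momentum light ray transform of a vector field. -/
def lrtVec (n : ℕ) (c : ℝ) (k : ℕ) (v : Fin (n + 1) → (Fin (n + 1) → ℝ) → ℂ)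
    (x : Fin (n + 1) → ℝ) (ω : Fin n → ℝ) : ℂ :=
  ∑ j, (ld n c ω j : ℂ) * ∫ s : ℝ, (s : ℂ) ^ k * v j (x + s • ld n c ω)

/-- The `k`-th momentum light ray transform of a symmetric 2-tensor field. -/
def lrt2 (n : ℕ) (c : ℝ) (k : ℕ) (f : Fin (n + 1) → Fin (n + 1) → (Fin (n + 1) → ℝ) → ℂ)
    (x : Fin (n + 1) → ℝ) (ω : Fin n → ℝ) : ℂ :=
  ∑ i, ∑ j, (ld n c ω i : ℂ) * (ld n c ω j : ℂ) *
    ∫ s : ℝ, (s : ℂ) ^ k * f i j (x + s • ld n c ω)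

open Metric

/-- Bound for the fderiv of a smooth compactly supported function. -/
lemma fderiv_bound {N : ℕ} {F : (Fin N → ℝ) → ℂ} (hF : ContDiff ℝ (⊤ : ℕ∞) F)
    (hsupp : HasCompactSupport F) :
    ∃ C : ℝ, 0 ≤ C ∧ ∀ y, ‖fderiv ℝ F y‖ ≤ C := by
  have hc1 : Continuous (fderiv ℝ F) := hF.continuous_fderiv (by simp)
  obtain ⟨C, hC⟩ := (hsupp.fderiv (𝕜 := ℝ)).isCompact.exists_bound_of_continuousOn hc1.continuousOn
  refine ⟨max C 0, le_max_right _ _, fun y => ?_⟩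
  by_cases hy : y ∈ tsupport (fderiv ℝ F)
  · exact (hC y hy).trans (le_max_left _ _)
  · have h0 : fderiv ℝ F y = 0 := image_eq_zero_of_notMem_tsupport hy
    simp [h0]

lemma key {N : ℕ} {F : (Fin N → ℝ) → ℂ} (hF : ContDiff ℝ (⊤ : ℕ∞) F)
    (hsupp : HasCompactSupport F) (k : ℕ)
    (a b a' b' : ℝ → (Fin N → ℝ))
    (ha : ∀ ε, HasDerivAt a (a' ε) ε) (hb : ∀ ε, HasDerivAt b (b' ε) ε)
    (hca' : Continuous a') (hcb' : Continuous b')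
    {m : ℝ} (hm : 0 < m) (hbm : ∀ ε, m ≤ ‖b ε‖) :
    HasDerivAt (fun ε => ∫ s : ℝ, (s : ℂ) ^ k * F (a ε + s • b ε))
      (∫ s : ℝ, (s : ℂ) ^ k * (fderiv ℝ F (a 0 + s • b 0)) (a' 0 + s • b' 0)) 0 := by
  have hca : Continuous a := by
    apply continuous_iff_continuousAt.2
    exact fun ε => (ha ε).differentiableAt.continuousAt
  -- radius of support of F
  obtain ⟨R0, hR0⟩ := hsupp.isBounded.subset_closedBall 0
  set R : ℝ := max R0 0 with hRdef
  have hR : tsupport F ⊆ closedBall 0 R :=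
    hR0.trans (closedBall_subset_closedBall (le_max_left _ _))
  have hRnn : 0 ≤ R := le_max_right _ _
  -- bounds on a, a', b' over closedBall 0 1
  obtain ⟨A, hA⟩ := (isCompact_closedBall (0:ℝ) 1).exists_bound_of_continuousOn hca.continuousOn
  obtain ⟨A'0, hA'0⟩ := (isCompact_closedBall (0:ℝ) 1).exists_bound_of_continuousOn hca'.continuousOn
  obtain ⟨B'0, hB'0⟩ := (isCompact_closedBall (0:ℝ) 1).exists_bound_of_continuousOn hcb'.continuousOn
  set A' : ℝ := max A'0 0 with hA'def
  set B' : ℝ := max B'0 0 with hB'def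
  have hA' : ∀ ε ∈ closedBall (0:ℝ) 1, ‖a' ε‖ ≤ A' := fun ε hε => (hA'0 ε hε).trans (le_max_left _ _)
  have hB' : ∀ ε ∈ closedBall (0:ℝ) 1, ‖b' ε‖ ≤ B' := fun ε hε => (hB'0 ε hε).trans (le_max_left _ _)
  have hAnn : 0 ≤ A := le_trans (norm_nonneg _) (hA 0 (mem_closedBall_self zero_le_one))
  have hA'nn : 0 ≤ A' := le_max_right _ _
  have hB'nn : 0 ≤ B' := le_max_right _ _
  obtain ⟨C, hCnn, hC⟩ := fderiv_bound hF hsupp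
  set S : ℝ := (R + A) / m with hSdef
  have hSnn : 0 ≤ S := div_nonneg (by linarith) hm.le
  -- support fact
  have hout : ∀ ε ∈ closedBall (0:ℝ) 1, ∀ s : ℝ, S < |s| → a ε + s • b ε ∉ tsupport F := by
    intro ε hε s hs hmem
    have h1 : ‖a ε + s • b ε‖ ≤ R := by
      have := hR hmem
      simpa using this
    have h2 : ‖s • b ε‖ ≤ ‖a ε + s • b ε‖ + ‖a ε‖ := by
      calc ‖s • b ε‖ = ‖(a ε + s • b ε) - a ε‖ := by rw [add_sub_cancel_left]
        _ ≤ ‖a ε + s • b ε‖ + ‖a ε‖ := norm_sub_le _ _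
    have h3 : |s| * m ≤ ‖s • b ε‖ := by
      rw [norm_smul, Real.norm_eq_abs]
      exact mul_le_mul_of_nonneg_left (hbm ε) (abs_nonneg s)
    have h4 : S * m < |s| * m := by
      exact mul_lt_mul_of_pos_right hs hm
    rw [hSdef, div_mul_cancel₀ _ hm.ne'] at h4
    have := hA ε hε
    linarith
  set M : ℝ := S ^ k * (C * (A' + S * B')) with hMdef
  set bound : ℝ → ℝ := Set.indicator (Set.Icc (-S) S) (fun _ => M) with hbounddef
  set F' : ℝ → ℝ → ℂ :=
    fun ε s => (s : ℂ) ^ k * (fderiv ℝ F (a ε + s • b ε)) (a' ε + s • b' ε) with hF'def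
  have hcurve : ∀ s : ℝ, Continuous fun ε => a ε + s • b ε := by
    intro s
    exact hca.add (((continuous_const (y := s)).smul (continuous_iff_continuousAt.2
      fun ε => (hb ε).differentiableAt.continuousAt)).congr fun ε => rfl)
  have hcurve' : ∀ ε : ℝ, Continuous fun s : ℝ => a ε + s • b ε :=
    fun ε => continuous_const.add (continuous_id.smul continuous_const)
  have hdiff : ∀ (s ε : ℝ),
      HasDerivAt (fun ε => (s : ℂ) ^ k * F (a ε + s • b ε)) (F' ε s) ε := by
    intro s ε
    have h1 : HasDerivAt (fun ε => a ε + s • b ε) (a' ε + s • b' ε) ε :=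
      (ha ε).add ((hb ε).const_smul s)
    have h2 : HasFDerivAt F (fderiv ℝ F (a ε + s • b ε)) (a ε + s • b ε) :=
      (hF.differentiable (by simp) _).hasFDerivAt
    exact (h2.comp_hasDerivAt ε h1).const_mul _
  have main := hasDerivAt_integral_of_dominated_loc_of_deriv_le (μ := volume)
      (F := fun ε s => (s : ℂ) ^ k * F (a ε + s • b ε)) (F' := F') (x₀ := (0:ℝ))
      (bound := bound) (ball_mem_nhds 0 zero_lt_one)
      (Filter.Eventually.of_forall fun ε =>
        ((Complex.continuous_ofReal.pow k).mul (hF.continuous.comp (hcurve' ε))).aestronglyMeasurable)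
      ?_ ?_ ?_ ?_ ?_
  · exact main.2
  · -- integrability at 0
    apply Continuous.integrable_of_hasCompactSupport
    · exact (Complex.continuous_ofReal.pow k).mul (hF.continuous.comp (hcurve' 0))
    · apply HasCompactSupport.intro (isCompact_Icc (a := -S) (b := S))
      intro s hs
      have habs : S < |s| := by
        rcases abs_cases s with ⟨h1, _⟩ | ⟨h1, _⟩ <;>
          [skip; skip] <;> simp only [Set.mem_Icc, not_and_or, not_le] at hs <;>
          rcases hs with hs | hs <;> linarith
      have hnm := hout 0 (mem_closedBall_self zero_le_one) s habs
      show (s : ℂ) ^ k * F (a 0 + s • b 0) = 0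
      rw [image_eq_zero_of_notMem_tsupport hnm, mul_zero]
  · -- measurability of F' 0
    apply Continuous.aestronglyMeasurable
    apply (Complex.continuous_ofReal.pow k).mul
    apply Continuous.clm_apply
    · exact (hF.continuous_fderiv (by simp)).comp (hcurve' 0)
    · exact continuous_const.add (continuous_id.smul continuous_const)
  · -- bound
    apply Filter.Eventually.of_forall
    intro s ε hε
    have hε1 : ε ∈ closedBall (0:ℝ) 1 := ball_subset_closedBall hε
    by_cases hmem : s ∈ Set.Icc (-S) S
    · rw [hbounddef, Set.indicator_of_mem hmem]
      have habs : |s| ≤ S := abs_le.2 ⟨hmem.1, hmem.2⟩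
      have h1 : ‖F' ε s‖ = |s| ^ k * ‖(fderiv ℝ F (a ε + s • b ε)) (a' ε + s • b' ε)‖ := by
        rw [hF'def, norm_mul, norm_pow, Complex.norm_real, Real.norm_eq_abs]
      rw [h1]
      have h2 : ‖(fderiv ℝ F (a ε + s • b ε)) (a' ε + s • b' ε)‖ ≤ C * (A' + S * B') := by
        calc ‖(fderiv ℝ F (a ε + s • b ε)) (a' ε + s • b' ε)‖
            ≤ ‖fderiv ℝ F (a ε + s • b ε)‖ * ‖a' ε + s • b' ε‖ :=
              (fderiv ℝ F _).le_opNorm _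
          _ ≤ C * (A' + S * B') := by
              apply mul_le_mul (hC _) ?_ (norm_nonneg _) hCnn
              calc ‖a' ε + s • b' ε‖ ≤ ‖a' ε‖ + ‖s • b' ε‖ := norm_add_le _ _
                _ ≤ A' + S * B' := by
                    rw [norm_smul, Real.norm_eq_abs]
                    exact add_le_add (hA' ε hε1)
                      (mul_le_mul habs (hB' ε hε1) (norm_nonneg _) hSnn)
      calc |s| ^ k * ‖(fderiv ℝ F (a ε + s • b ε)) (a' ε + s • b' ε)‖
          ≤ S ^ k * (C * (A' + S * B')) := by
            apply mul_le_mul (pow_le_pow_left₀ (abs_nonneg s) habs k) h2 (norm_nonneg _)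
              (pow_nonneg hSnn k)
        _ = M := rfl
    · rw [hbounddef, Set.indicator_of_notMem hmem]
      have habs : S < |s| := by
        simp only [Set.mem_Icc, not_and_or, not_le] at hmem
        rcases hmem with hs | hs <;> rcases abs_cases s with ⟨h1, _⟩ | ⟨h1, _⟩ <;> linarith
      have hnotin := hout ε hε1 s habs
      have h0 : fderiv ℝ F (a ε + s • b ε) = 0 :=
        Function.notMem_support.mp (fun hsup => hnotin (support_fderiv_subset ℝ hsup))
      rw [hF'def]
      simp [h0]
  · -- bound integrable
    rw [hbounddef]
    rw [integrable_indicator_iff measurableSet_Icc]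
    exact integrableOn_const measure_Icc_lt_top.ne
  · -- differentiability
    exact Filter.Eventually.of_forall fun s => fun ε _ => hdiff s ε

/-- Padding a spatial vector with time component `0`. -/
def pad {n : ℕ} (v : Fin n → ℝ) : Fin (n + 1) → ℝ := Fin.cons 0 v

lemma ld_norm_ge {n : ℕ} {c : ℝ} (hc : 0 < c) (ω : Fin n → ℝ) : c ≤ ‖ld n c ω‖ := by
  calc c = ‖ld n c ω 0‖ := by simp [ld, Real.norm_eq_abs, abs_of_pos hc]
    _ ≤ ‖ld n c ω‖ := norm_le_pi_norm _ 0

/-- Derivative of `lrt2` in the base point, in direction `w`. -/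
lemma deriv_base (n : ℕ) {c : ℝ} (hc : 0 < c) (k : ℕ)
    (f : Fin (n + 1) → Fin (n + 1) → (Fin (n + 1) → ℝ) → ℂ)
    (hreg : ∀ i j, ContDiff ℝ (⊤ : ℕ∞) (f i j) ∧ HasCompactSupport (f i j))
    (x w : Fin (n + 1) → ℝ) (ω : Fin n → ℝ) :
    HasDerivAt (fun τ : ℝ => lrt2 n c k f (x + τ • w) ω)
      (∑ i, ∑ j, (ld n c ω i : ℂ) * (ld n c ω j : ℂ) *
        ∫ s : ℝ, (s : ℂ) ^ k * (fderiv ℝ (f i j) (x + s • ld n c ω)) w) 0 := by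
  unfold lrt2
  refine HasDerivAt.fun_sum fun i _ => HasDerivAt.fun_sum fun j _ => ?_
  have hkey := key (hreg i j).1 (hreg i j).2 k (fun τ => x + τ • w) (fun _ => ld n c ω)
    (fun _ => w) (fun _ => 0)
    (fun τ => by simpa using ((hasDerivAt_id τ).smul_const w).const_add x)
    (fun τ => hasDerivAt_const τ _)
    continuous_const continuous_const hc (fun τ => ld_norm_ge hc ω)
  have hkey' : HasDerivAt (fun τ : ℝ => ∫ s : ℝ, (s : ℂ) ^ k * f i j (x + τ • w + s • ld n c ω))
      (∫ s : ℝ, (s : ℂ) ^ k * (fderiv ℝ (f i j) (x + s • ld n c ω)) w) 0 := by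
    simpa using hkey
  exact hkey'.const_mul _

/-- Derivative of `lrt2` in the direction `ω`, along the sphere curve
`ε ↦ cos ε • ω + sin ε • v`. -/
lemma deriv_dir (n : ℕ) {c : ℝ} (hc : 0 < c) (k : ℕ)
    (f : Fin (n + 1) → Fin (n + 1) → (Fin (n + 1) → ℝ) → ℂ)
    (hreg : ∀ i j, ContDiff ℝ (⊤ : ℕ∞) (f i j) ∧ HasCompactSupport (f i j))
    (x : Fin (n + 1) → ℝ) (ω v : Fin n → ℝ) :
    HasDerivAt
      (fun ε : ℝ => lrt2 n c k f x (fun q => Real.cos ε * ω q + Real.sin ε * v q))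
      (∑ i : Fin (n + 1), ∑ j : Fin (n + 1),
        ((((pad v i : ℝ) : ℂ) * (ld n c ω j : ℂ)
            + (ld n c ω i : ℂ) * ((pad v j : ℝ) : ℂ)) *
          (∫ s : ℝ, (s : ℂ) ^ k * f i j (x + s • ld n c ω))
        + (ld n c ω i : ℂ) * (ld n c ω j : ℂ) *
          (∫ s : ℝ, (s : ℂ) ^ (k + 1) *
            (fderiv ℝ (f i j) (x + s • ld n c ω)) (pad v)))) 0 := by
  set γ : ℝ → Fin n → ℝ := fun ε q => Real.cos ε * ω q + Real.sin ε * v q with hγdef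
  have hγ0 : γ 0 = ω := by funext q; simp [hγdef]
  set w : Fin (n + 1) → ℝ := pad v with hwdef
  set b' : ℝ → Fin (n + 1) → ℝ :=
    fun ε => Fin.cons 0 (fun q => -Real.sin ε * ω q + Real.cos ε * v q) with hb'def
  have hb'0 : b' 0 = w := by
    funext p
    refine Fin.cases ?_ (fun q => ?_) p <;> simp [hb'def, hwdef, pad]
  -- derivative of the coefficients
  have hL : ∀ p : Fin (n + 1),
      HasDerivAt (fun ε : ℝ => ((ld n c (γ ε) p : ℝ) : ℂ)) ((w p : ℝ) : ℂ) 0 := by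
    intro p
    refine Fin.cases ?_ (fun q => ?_) p
    · simp only [ld, Fin.cons_zero, hwdef, pad]
      simpa using hasDerivAt_const (0 : ℝ) ((c : ℝ) : ℂ)
    · simp only [ld, Fin.cons_succ, hwdef, pad]
      apply HasDerivAt.ofReal_comp
      have := ((Real.hasDerivAt_cos 0).mul_const (ω q)).fun_add
        ((Real.hasDerivAt_sin 0).mul_const (v q))
      simpa using this
  -- derivative of the integrals
  have hI : ∀ i j : Fin (n + 1),
      HasDerivAt (fun ε : ℝ => ∫ s : ℝ, (s : ℂ) ^ k * f i j (x + s • ld n c (γ ε)))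
        (∫ s : ℝ, (s : ℂ) ^ (k + 1) *
          (fderiv ℝ (f i j) (x + s • ld n c ω)) w) 0 := by
    intro i j
    have hb : ∀ ε : ℝ, HasDerivAt (fun ε => ld n c (γ ε)) (b' ε) ε := by
      intro ε
      apply hasDerivAt_pi.2
      intro p
      refine Fin.cases ?_ (fun q => ?_) p
      · simp only [ld, Fin.cons_zero, hb'def]
        exact hasDerivAt_const ε c
      · simp only [ld, Fin.cons_succ, hb'def]
        exact ((Real.hasDerivAt_cos ε).mul_const (ω q)).add
          ((Real.hasDerivAt_sin ε).mul_const (v q))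
    have hcb' : Continuous b' := by
      apply continuous_pi
      intro p
      refine Fin.cases ?_ (fun q => ?_) p
      · simp only [hb'def, Fin.cons_zero]; exact continuous_const
      · simp only [hb'def, Fin.cons_succ]
        exact ((Real.continuous_sin.neg).mul continuous_const).add
          (Real.continuous_cos.mul continuous_const)
    have hkey := key (hreg i j).1 (hreg i j).2 k (fun _ => x) (fun ε => ld n c (γ ε))
      (fun _ => 0) b' (fun ε => hasDerivAt_const ε x) hb continuous_const hcb'
      hc (fun ε => ld_norm_ge hc (γ ε))
    have heq : (fun s : ℝ => (s : ℂ) ^ k *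
        (fderiv ℝ (f i j) ((fun _ : ℝ => x) 0 + s • ld n c (γ 0))) ((fun _ : ℝ => (0 : Fin (n+1) → ℝ)) 0 + s • b' 0))
        = fun s : ℝ => (s : ℂ) ^ (k + 1) *
          (fderiv ℝ (f i j) (x + s • ld n c ω)) w := by
      funext s
      simp only [hγ0, hb'0, zero_add, _root_.map_smul, Complex.real_smul]
      ring
    rw [← heq]
    exact hkey
  unfold lrt2
  refine HasDerivAt.fun_sum fun i _ => HasDerivAt.fun_sum fun j _ => ?_
  have := ((hL i).fun_mul (hL j)).fun_mul (hI i j)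
  simpa only [hγ0] using this

/-- If `L̃^{2,k} f` vanishes on `B_n(ω₀, δ)` for `k = 0,1,2`, then for
`k = 0,1`, every `i ∈ {1,…,n}` and every base point and `ω ∈ B_n(ω₀, δ)`:
`L̃^{1,k}((f)_i) = −c ω_i · L̃^{1,k}((f)_0)`, where `(f)_p` is the `p`-th column. -/
theorem two_tensor_column_relation
    (n : ℕ) (hn : 2 ≤ n) (c : ℝ) (hc : 0 < c)
    (ω₀ : Fin n → ℝ) (hω₀ : onSphere n ω₀) (δ : ℝ) (hδ : 0 < δ)
    (f : Fin (n + 1) → Fin (n + 1) → (Fin (n + 1) → ℝ) → ℂ)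
    (hsym : ∀ i j, f i j = f j i)
    (hreg : ∀ i j, ContDiff ℝ (⊤ : ℕ∞) (f i j) ∧ HasCompactSupport (f i j))
    (h : ∀ k ≤ 2, ∀ (x : Fin (n + 1) → ℝ) (ω : Fin n → ℝ), inBall n ω₀ δ ω →
      lrt2 n c k f x ω = 0) :
    ∀ k ≤ 1, ∀ (i : Fin n) (x : Fin (n + 1) → ℝ) (ω : Fin n → ℝ), inBall n ω₀ δ ω →
      lrtVec n c k (fun j => f j i.succ) x ω
        = -((c * ω i : ℝ) : ℂ) * lrtVec n c k (fun j => f j 0) x ω := by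
  intro k hk i x ω hω
  have hsph : ∑ q, ω q ^ 2 = 1 := hω.1
  have hballx : ∑ q, (ω q - ω₀ q) ^ 2 < δ ^ 2 := hω.2
  set I : Fin (n + 1) → Fin (n + 1) → ℂ :=
    fun p q => ∫ s : ℝ, (s : ℂ) ^ k * f p q (x + s • ld n c ω) with hIdef
  have hI_eq : ∀ p q, (∫ s : ℝ, (s : ℂ) ^ k * f p q (x + s • ld n c ω)) = I p q :=
    fun p q => rfl
  have hIsym : ∀ p q, I p q = I q p := fun p q => by
    simp only [hIdef]; rw [hsym p q]
  set A : Fin (n + 1) → ℂ := fun p => ∑ j, (ld n c ω j : ℂ) * I j p with hAdef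
  -- the goal in terms of A
  suffices hS : A i.succ = -((c * ω i : ℝ) : ℂ) * A 0 by exact hS
  -- base identity
  have hbase : (c : ℂ) * A 0 + (∑ q : Fin n, ((ω q : ℝ) : ℂ) * A q.succ) = 0 := by
    have h0 := h k (le_trans hk one_le_two) x ω hω
    unfold lrt2 at h0
    simp only [hI_eq] at h0
    have h1 : ∑ p : Fin (n + 1), (ld n c ω p : ℂ) * A p = 0 := by
      rw [← h0]
      apply Finset.sum_congr rfl
      intro p _
      rw [hAdef, Finset.mul_sum]
      apply Finset.sum_congr rfl
      intro q _
      rw [hIsym q p, mul_assoc]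
    rw [Fin.sum_univ_succ] at h1
    simpa [ld] using h1
  -- tangent identity
  have tangent : ∀ v : Fin n → ℝ, (∑ q, v q * ω q) = 0 → (∑ q, v q ^ 2) = 1 →
      (∑ q : Fin n, ((v q : ℝ) : ℂ) * A q.succ) = 0 := by
    intro v hvω hv2
    set J : Fin (n + 1) → Fin (n + 1) → ℂ :=
      fun p q => ∫ s : ℝ, (s : ℂ) ^ (k + 1) *
        (fderiv ℝ (f p q) (x + s • ld n c ω)) (pad v) with hJdef
    have hJ_eq : ∀ p q, (∫ s : ℝ, (s : ℂ) ^ (k + 1) *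
        (fderiv ℝ (f p q) (x + s • ld n c ω)) (pad v)) = J p q := fun _ _ => rfl
    -- step 1: the J-sum vanishes
    have hstep1 : (∑ p : Fin (n + 1), ∑ q : Fin (n + 1),
        (ld n c ω p : ℂ) * (ld n c ω q : ℂ) * J p q) = 0 := by
      have hd := deriv_base n hc (k + 1) f hreg x (pad v) ω
      have hzero : (fun τ : ℝ => lrt2 n c (k + 1) f (x + τ • pad v) ω) = fun _ => 0 :=
        funext fun τ => h (k + 1) (by omega) _ ω hω
      rw [hzero] at hd
      have huniq := hd.unique (hasDerivAt_const 0 0)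
      simp only [hJ_eq] at huniq
      exact huniq
    -- the sphere curve
    have hsphγ : ∀ ε : ℝ, onSphere n (fun q => Real.cos ε * ω q + Real.sin ε * v q) := by
      intro ε
      unfold onSphere
      rw [show (∑ q, (Real.cos ε * ω q + Real.sin ε * v q) ^ 2)
          = ∑ q, (Real.cos ε ^ 2 * ω q ^ 2 + (2 * Real.cos ε * Real.sin ε) * (v q * ω q)
            + Real.sin ε ^ 2 * v q ^ 2) from Finset.sum_congr rfl fun q _ => by ring]
      rw [Finset.sum_add_distrib, Finset.sum_add_distrib, ← Finset.mul_sum, ← Finset.mul_sum,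
        ← Finset.mul_sum, hsph, hvω, hv2]
      simp only [mul_one, mul_zero, add_zero]
      exact Real.cos_sq_add_sin_sq ε
    -- eventually in the ball
    have hcont : Continuous (fun ε : ℝ =>
        ∑ q, ((Real.cos ε * ω q + Real.sin ε * v q) - ω₀ q) ^ 2) := by
      apply continuous_finset_sum
      intro q _
      exact (((Real.continuous_cos.mul continuous_const).add
        (Real.continuous_sin.mul continuous_const)).sub continuous_const).pow 2
    have h00 : (fun ε : ℝ =>
        ∑ q, ((Real.cos ε * ω q + Real.sin ε * v q) - ω₀ q) ^ 2) 0 < δ ^ 2 := by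
      simpa using hballx
    have hlt := hcont.continuousAt.eventually_lt (continuousAt_const (y := δ ^ 2)) h00
    have hev : (fun ε : ℝ => lrt2 n c k f x (fun q => Real.cos ε * ω q + Real.sin ε * v q))
        =ᶠ[nhds 0] fun _ => 0 := by
      filter_upwards [hlt] with ε hε
      exact h k (le_trans hk one_le_two) x _ ⟨hsphγ ε, hε⟩
    have hd2 := deriv_dir n hc k f hreg x ω v
    have hd20 : HasDerivAt
        (fun ε : ℝ => lrt2 n c k f x (fun q => Real.cos ε * ω q + Real.sin ε * v q))
        0 0 := (hasDerivAt_const (0 : ℝ) (0 : ℂ)).congr_of_eventuallyEq hev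
    have hD2 := hd2.unique hd20
    simp only [hI_eq, hJ_eq, Finset.sum_add_distrib] at hD2
    rw [hstep1, add_zero] at hD2
    -- hD2 : ∑ p ∑ q ((pad v p) * ld q + ld p * (pad v q)) * I p q = 0
    simp only [add_mul, Finset.sum_add_distrib] at hD2
    have hswap : (∑ p : Fin (n + 1), ∑ q : Fin (n + 1),
          (ld n c ω p : ℂ) * ((pad v q : ℝ) : ℂ) * I p q)
        = ∑ p : Fin (n + 1), ∑ q : Fin (n + 1),
          ((pad v p : ℝ) : ℂ) * (ld n c ω q : ℂ) * I p q := by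
      rw [Finset.sum_comm]
      apply Finset.sum_congr rfl
      intro p _
      apply Finset.sum_congr rfl
      intro q _
      rw [hIsym q p]
      ring
    rw [hswap] at hD2
    have hhalf : (∑ p : Fin (n + 1), ∑ q : Fin (n + 1),
        ((pad v p : ℝ) : ℂ) * (ld n c ω q : ℂ) * I p q) = 0 := by
      have := add_self_eq_zero.mp hD2
      exact this
    have hfin : (∑ p : Fin (n + 1), ((pad v p : ℝ) : ℂ) * A p) = 0 := by
      rw [← hhalf]
      apply Finset.sum_congr rfl
      intro p _
      rw [hAdef, Finset.mul_sum]
      apply Finset.sum_congr rfl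
      intro q _
      rw [hIsym q p]
      ring
    rw [Fin.sum_univ_succ] at hfin
    simpa [pad] using hfin
  set T : ℂ := ∑ q : Fin n, ((ω q : ℝ) : ℂ) * A q.succ with hTdef
  have hsq_le : ω i ^ 2 ≤ 1 := by
    have hle := Finset.single_le_sum (f := fun q => ω q ^ 2)
      (fun q _ => sq_nonneg _) (Finset.mem_univ i)
    rw [hsph] at hle
    exact hle
  by_cases hu : 1 - ω i ^ 2 = 0
  · -- degenerate case: ω = ±eᵢ
    have hq0 : ∀ q, q ≠ i → ω q = 0 := by
      intro q hqi
      have h2 : (∑ q' ∈ Finset.univ.erase i, ω q' ^ 2) + ω i ^ 2 = ∑ q, ω q ^ 2 :=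
        Finset.sum_erase_add Finset.univ (fun q => ω q ^ 2) (Finset.mem_univ i)
      rw [hsph] at h2
      have h1 : ∑ q' ∈ Finset.univ.erase i, ω q' ^ 2 = 0 := by linarith
      have h3 := (Finset.sum_eq_zero_iff_of_nonneg (fun q' _ => sq_nonneg (ω q'))).mp h1
      have h4 := h3 q (Finset.mem_erase.mpr ⟨hqi, Finset.mem_univ q⟩)
      exact pow_eq_zero_iff two_ne_zero |>.mp h4
    have hT : T = ((ω i : ℝ) : ℂ) * A i.succ := by
      rw [hTdef]
      apply Finset.sum_eq_single_of_mem i (Finset.mem_univ i)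
      intro q _ hqi
      rw [hq0 q hqi]
      simp
    have hsqC : ((ω i : ℝ) : ℂ) ^ 2 = 1 := by
      have h1 : ω i ^ 2 = 1 := by linarith
      rw [← Complex.ofReal_pow, h1, Complex.ofReal_one]
    have hbase' : (c : ℂ) * A 0 + ((ω i : ℝ) : ℂ) * A i.succ = 0 := by
      rw [← hT]; exact hbase
    have hgoal : A i.succ = -((c : ℂ) * ((ω i : ℝ) : ℂ)) * A 0 := by
      linear_combination ((ω i : ℝ) : ℂ) * hbase' - A i.succ * hsqC
    rw [hgoal]
    push_cast
    ring
  · -- nondegenerate case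
    have hupos : 0 < 1 - ω i ^ 2 := lt_of_le_of_ne (by linarith) (Ne.symm hu)
    set r : ℝ := Real.sqrt (1 - ω i ^ 2) with hrdef
    have hr2 : r ^ 2 = 1 - ω i ^ 2 := Real.sq_sqrt hupos.le
    have hrpos : 0 < r := Real.sqrt_pos.mpr hupos
    set vv : Fin n → ℝ := fun q => r⁻¹ * ((if q = i then 1 else 0) - ω i * ω q) with hvvdef
    have hite1 : ∑ q : Fin n, (if q = i then (1 : ℝ) else 0) * ω q = ω i := by
      simp [ite_mul]
    have hite0 : ∑ q : Fin n, (if q = i then (1 : ℝ) else 0) = 1 := by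
      simp
    have hvvω : ∑ q, vv q * ω q = 0 := by
      have hterm : ∀ q : Fin n, vv q * ω q
          = r⁻¹ * ((if q = i then (1 : ℝ) else 0) * ω q - ω i * ω q ^ 2) := fun q => by
        rw [hvvdef]; ring
      calc ∑ q, vv q * ω q
          = r⁻¹ * ∑ q : Fin n, ((if q = i then (1 : ℝ) else 0) * ω q - ω i * ω q ^ 2) := by
            rw [Finset.mul_sum]
            exact Finset.sum_congr rfl fun q _ => hterm q
        _ = r⁻¹ * ((∑ q : Fin n, (if q = i then (1 : ℝ) else 0) * ω q)
              - ω i * ∑ q : Fin n, ω q ^ 2) := by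
            rw [Finset.sum_sub_distrib, ← Finset.mul_sum]
        _ = 0 := by rw [hite1, hsph]; ring
    have hvv2 : ∑ q, vv q ^ 2 = 1 := by
      have hterm : ∀ q : Fin n, vv q ^ 2
          = r⁻¹ ^ 2 * (((if q = i then (1 : ℝ) else 0)
            - 2 * ω i * ((if q = i then (1 : ℝ) else 0) * ω q)) + ω i ^ 2 * ω q ^ 2) := by
        intro q
        by_cases hq : q = i <;> simp only [hvvdef, hq, if_pos, if_neg, ite_true, ite_false] <;>
          simp [hq] <;> ring
      calc ∑ q, vv q ^ 2
          = r⁻¹ ^ 2 * ∑ q : Fin n, (((if q = i then (1 : ℝ) else 0)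
              - 2 * ω i * ((if q = i then (1 : ℝ) else 0) * ω q)) + ω i ^ 2 * ω q ^ 2) := by
            rw [Finset.mul_sum]
            exact Finset.sum_congr rfl fun q _ => hterm q
        _ = r⁻¹ ^ 2 * (((∑ q : Fin n, (if q = i then (1 : ℝ) else 0))
              - 2 * ω i * ∑ q : Fin n, (if q = i then (1 : ℝ) else 0) * ω q)
              + ω i ^ 2 * ∑ q : Fin n, ω q ^ 2) := by
            rw [Finset.sum_add_distrib, Finset.sum_sub_distrib, ← Finset.mul_sum,
              ← Finset.mul_sum]
        _ = r⁻¹ ^ 2 * r ^ 2 := by rw [hite0, hite1, hsph, hr2]; ring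
        _ = 1 := by rw [← mul_pow, inv_mul_cancel₀ hrpos.ne', one_pow]
    have htan := tangent vv hvvω hvv2
    have hexp : (∑ q : Fin n, ((vv q : ℝ) : ℂ) * A q.succ)
        = ((r⁻¹ : ℝ) : ℂ) * ((∑ q : Fin n, (if q = i then (1 : ℂ) else 0) * A q.succ)
            - ((ω i : ℝ) : ℂ) * T) := by
      rw [hTdef]
      calc ∑ q : Fin n, ((vv q : ℝ) : ℂ) * A q.succ
          = ∑ q : Fin n, ((r⁻¹ : ℝ) : ℂ) * ((if q = i then (1 : ℂ) else 0) * A q.succ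
              - ((ω i : ℝ) : ℂ) * (((ω q : ℝ) : ℂ) * A q.succ)) := by
            apply Finset.sum_congr rfl
            intro q _
            by_cases hq : q = i <;> simp only [hvvdef, hq, ite_true, ite_false, if_pos, if_neg] <;>
              push_cast [hq] <;> ring
        _ = ((r⁻¹ : ℝ) : ℂ) * ((∑ q : Fin n, (if q = i then (1 : ℂ) else 0) * A q.succ)
              - ((ω i : ℝ) : ℂ) * ∑ q : Fin n, ((ω q : ℝ) : ℂ) * A q.succ) := by
            rw [← Finset.mul_sum, Finset.sum_sub_distrib, ← Finset.mul_sum]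
    have hsum_ite : (∑ q : Fin n, (if q = i then (1 : ℂ) else 0) * A q.succ) = A i.succ := by
      simp [ite_mul]
    rw [hexp, hsum_ite] at htan
    have hrne : ((r⁻¹ : ℝ) : ℂ) ≠ 0 :=
      Complex.ofReal_ne_zero.mpr (inv_ne_zero hrpos.ne')
    have hAT : A i.succ = ((ω i : ℝ) : ℂ) * T := by
      have h5 := (mul_eq_zero.mp htan).resolve_left hrne
      exact sub_eq_zero.mp h5
    push_cast
    linear_combination hAT + ((ω i : ℝ) : ℂ) * hbase
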